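/- arXiv:1003.3286 — 3 statements merged into one kernel-verified Lean document; each statement's English description precedes it below -/
import Mathlib

section
/- Fix any configuration of marks on ℕ×ℤ₊ and let the R-process r_k(t) be defined from it as in the context. Let L'(s,t) be the maximum cardinality of a strictly increasing (in both coordinates) sequence of marked sites contained in {1,…,s}×{0,…,t}. Then for every (s,t) ∈ ℕ×ℤ₊ and every 1 ≤ y ≤ s: L'(s,t) ≥ y if and only if particle s−y+1 jumps to the right at least y times during the first t+1 time-steps of the R-process, i.e. if and only if r_{s−y+1}(t+1) ≥ s+1. -/
open Classical in
/-- The R-process: `rProc marked t k` is the position of particle `k` at time `t`.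
Particle `k` starts at `k` and at time `t+1` it moves one step to the right iff there is a
particle `k* ≤ k` occupying, together with particles `k*+1, …, k`, consecutive sites,
such that the space-time site `(r_{k*}(t), t)` is marked. -/
noncomputable def rProc (marked : ℕ × ℕ → Prop) : ℕ → ℕ → ℕ
  | 0 => fun k => k
  | (t + 1) => fun k =>
      if ∃ k', 1 ≤ k' ∧ k' ≤ k ∧ rProc marked t k' = rProc marked t k - (k - k') ∧
          marked (rProc marked t k', t)
      then rProc marked t k + 1
      else rProc marked t k

/-- Maximal cardinality of a strictly increasing sequence of marked sites
in `{1,…,s} × {0,…,t}`. -/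
noncomputable def LIP' (marked : ℕ × ℕ → Prop) (s t : ℕ) : ℕ :=
  sSup {y : ℕ | ∃ f : Fin y → ℕ × ℕ,
    (∀ i, 1 ≤ (f i).1 ∧ (f i).1 ≤ s ∧ (f i).2 ≤ t ∧ marked (f i)) ∧
    ∀ i j : Fin y, i < j → (f i).1 < (f j).1 ∧ (f i).2 < (f j).2}

/-- The jump condition for particle `k` at time `t`. -/
def Jump (marked : ℕ × ℕ → Prop) (t k : ℕ) : Prop :=
  ∃ k', 1 ≤ k' ∧ k' ≤ k ∧ rProc marked t k' = rProc marked t k - (k - k') ∧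
      marked (rProc marked t k', t)

lemma rProc_zero (marked : ℕ × ℕ → Prop) (k : ℕ) : rProc marked 0 k = k := rfl

lemma rProc_succ_pos {marked : ℕ × ℕ → Prop} {t k : ℕ} (h : Jump marked t k) :
    rProc marked (t + 1) k = rProc marked t k + 1 := by
  unfold Jump at h
  simp only [rProc]
  rw [if_pos h]

lemma rProc_succ_neg {marked : ℕ × ℕ → Prop} {t k : ℕ} (h : ¬ Jump marked t k) :
    rProc marked (t + 1) k = rProc marked t k := by
  unfold Jump at h
  simp only [rProc]
  rw [if_neg h]

lemma rProc_step_cases (marked : ℕ × ℕ → Prop) (t k : ℕ) :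
    rProc marked (t + 1) k = rProc marked t k + 1 ∨
      rProc marked (t + 1) k = rProc marked t k := by
  by_cases h : Jump marked t k
  · exact Or.inl (rProc_succ_pos h)
  · exact Or.inr (rProc_succ_neg h)

lemma rProc_ge (marked : ℕ × ℕ → Prop) : ∀ t k, k ≤ rProc marked t k := by
  intro t
  induction t with
  | zero => intro k; simp [rProc_zero]
  | succ t ih =>
    intro k
    rcases rProc_step_cases marked t k with h | h <;> have := ih k <;> omega

lemma rProc_mono_t (marked : ℕ × ℕ → Prop) (t k : ℕ) :
    rProc marked t k ≤ rProc marked (t + 1) k := by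
  rcases rProc_step_cases marked t k with h | h <;> omega

lemma rProc_le_succ (marked : ℕ × ℕ → Prop) (t k : ℕ) :
    rProc marked (t + 1) k ≤ rProc marked t k + 1 := by
  rcases rProc_step_cases marked t k with h | h <;> omega

lemma rProc_strict (marked : ℕ × ℕ → Prop) :
    ∀ t k, rProc marked t k + 1 ≤ rProc marked t (k + 1) := by
  intro t
  induction t with
  | zero => intro k; simp [rProc_zero]
  | succ t ih =>
    intro k
    by_cases h1 : Jump marked t (k + 1)
    · rw [rProc_succ_pos h1]
      have := ih k
      have := rProc_le_succ marked t k
      omega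
    · rw [rProc_succ_neg h1]
      by_cases h2 : Jump marked t k
      · -- if k jumps and positions are adjacent, k+1 would also jump
        have hgap := ih k
        rcases Nat.lt_or_ge (rProc marked t k + 1) (rProc marked t (k + 1)) with hlt | hge
        · have := rProc_le_succ marked t k
          rw [rProc_succ_pos h2]
          omega
        · have heq : rProc marked t (k + 1) = rProc marked t k + 1 := by omega
          exfalso
          obtain ⟨k', hk1, hk2, hk3, hk4⟩ := h2
          apply h1
          refine ⟨k', hk1, by omega, ?_, hk4⟩
          have hgek : k ≤ rProc marked t k := rProc_ge marked t k
          rw [heq]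
          omega
      · rw [rProc_succ_neg h2]; exact ih k

lemma rProc_gap (marked : ℕ × ℕ → Prop) (t : ℕ) :
    ∀ d k, rProc marked t k + d ≤ rProc marked t (k + d) := by
  intro d
  induction d with
  | zero => intro k; simp
  | succ d ih =>
    intro k
    have h1 := rProc_strict marked t (k + d)
    have h2 := ih k
    have : k + (d + 1) = (k + d) + 1 := rfl
    rw [this]
    omega

/-- The predicate: there is a strictly increasing sequence of `y` marked sites
in `{1,…,s} × {0,…,t}`. -/
def PSeq (marked : ℕ × ℕ → Prop) (s t y : ℕ) : Prop :=
  ∃ f : Fin y → ℕ × ℕ,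
    (∀ i, 1 ≤ (f i).1 ∧ (f i).1 ≤ s ∧ (f i).2 ≤ t ∧ marked (f i)) ∧
    ∀ i j : Fin y, i < j → (f i).1 < (f j).1 ∧ (f i).2 < (f j).2

lemma LIP'_eq (marked : ℕ × ℕ → Prop) (s t : ℕ) :
    LIP' marked s t = sSup {y | PSeq marked s t y} := rfl

lemma PSeq_zero (marked : ℕ × ℕ → Prop) (s t : ℕ) : PSeq marked s t 0 :=
  ⟨Fin.elim0, fun i => i.elim0, fun i => i.elim0⟩

lemma PSeq_mono_y {marked : ℕ × ℕ → Prop} {s t y z : ℕ} (h : y ≤ z)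
    (hz : PSeq marked s t z) : PSeq marked s t y := by
  obtain ⟨f, hf, hmono⟩ := hz
  exact ⟨f ∘ Fin.castLE h, fun i => hf _, fun i j hij => hmono _ _ hij⟩

lemma PSeq_mono_t {marked : ℕ × ℕ → Prop} {s t y : ℕ}
    (h : PSeq marked s t y) : PSeq marked s (t + 1) y := by
  obtain ⟨f, hf, hmono⟩ := h
  exact ⟨f, fun i => ⟨(hf i).1, (hf i).2.1, (hf i).2.2.1.trans (Nat.le_succ t),
    (hf i).2.2.2⟩, hmono⟩

lemma PSeq_first_ge {marked : ℕ × ℕ → Prop} {s t y : ℕ} {f : Fin y → ℕ × ℕ}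
    (hf : ∀ i, 1 ≤ (f i).1 ∧ (f i).1 ≤ s ∧ (f i).2 ≤ t ∧ marked (f i))
    (hmono : ∀ i j : Fin y, i < j → (f i).1 < (f j).1 ∧ (f i).2 < (f j).2) :
    ∀ m (hm : m < y), m + 1 ≤ (f ⟨m, hm⟩).1 := by
  intro m
  induction m with
  | zero => intro hm; exact (hf _).1
  | succ m ih =>
    intro hm
    have h1 := ih (by omega)
    have h2 := (hmono ⟨m, by omega⟩ ⟨m + 1, hm⟩ (by simp [Fin.lt_def])).1
    omega

lemma PSeq_bound {marked : ℕ × ℕ → Prop} {s t y : ℕ} (h : PSeq marked s t y) :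
    y ≤ s := by
  obtain ⟨f, hf, hmono⟩ := h
  rcases Nat.eq_zero_or_pos y with rfl | hy
  · exact Nat.zero_le s
  · have h1 := PSeq_first_ge hf hmono (y - 1) (by omega)
    have h2 := (hf ⟨y - 1, by omega⟩).2.1
    omega

lemma PSeq_snoc {marked : ℕ × ℕ → Prop} {q t y p s : ℕ}
    (h : PSeq marked q t y) (hm : marked (p, t + 1)) (hqp : q < p)
    (hp1 : 1 ≤ p) (hps : p ≤ s) : PSeq marked s (t + 1) (y + 1) := by
  obtain ⟨f, hf, hmono⟩ := h
  refine ⟨Fin.snoc f (p, t + 1), ?_, ?_⟩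
  · intro i
    by_cases hi : (i : ℕ) = y
    · have : i = Fin.last y := Fin.ext hi
      rw [this, Fin.snoc_last]
      exact ⟨hp1, hps, le_refl _, hm⟩
    · have hiy : (i : ℕ) < y := by have := i.isLt; omega
      have : i = Fin.castSucc ⟨(i : ℕ), hiy⟩ := Fin.ext rfl
      rw [this, Fin.snoc_castSucc]
      have hfi := hf ⟨(i : ℕ), hiy⟩
      exact ⟨hfi.1, by omega, by omega, hfi.2.2.2⟩
  · intro i j hij
    have hij' : (i : ℕ) < (j : ℕ) := hij
    by_cases hj : (j : ℕ) = y
    · have hjl : j = Fin.last y := Fin.ext hj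
      have hiy : (i : ℕ) < y := by omega
      have hil : i = Fin.castSucc ⟨(i : ℕ), hiy⟩ := Fin.ext rfl
      rw [hjl, hil, Fin.snoc_castSucc, Fin.snoc_last]
      have hfi := hf ⟨(i : ℕ), hiy⟩
      constructor
      · have := hfi.2.1; simp only []; omega
      · have := hfi.2.2.1; simp only []; omega
    · have hjy : (j : ℕ) < y := by have := j.isLt; omega
      have hiy : (i : ℕ) < y := by omega
      have hil : i = Fin.castSucc ⟨(i : ℕ), hiy⟩ := Fin.ext rfl
      have hjl : j = Fin.castSucc ⟨(j : ℕ), hjy⟩ := Fin.ext rfl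
      rw [hil, hjl, Fin.snoc_castSucc, Fin.snoc_castSucc]
      exact hmono _ _ hij'

lemma main_aux (marked : ℕ × ℕ → Prop) :
    ∀ t k z, 1 ≤ k →
      (PSeq marked (k + z) t (z + 1) ↔ k + z + 1 ≤ rProc marked (t + 1) k) := by
  intro t
  induction t with
  | zero =>
    intro k z hk
    constructor
    · rintro ⟨f, hf, hmono⟩
      rcases Nat.eq_zero_or_pos z with rfl | hz
      · -- a single marked site (p, 0) with 1 ≤ p ≤ k
        have h0 := hf 0
        have hp2 : (f 0).2 = 0 := by have := h0.2.2.1; omega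
        have hjump : Jump marked 0 k := by
          refine ⟨(f 0).1, h0.1, by have := h0.2.1; omega, ?_, ?_⟩
          · simp only [rProc_zero]
            have := h0.2.1; omega
          · simp only [rProc_zero]
            have hfe : f 0 = ((f 0).1, 0) := by
              ext <;> simp [hp2]
            have hm := h0.2.2.2
            rw [hfe] at hm
            exact hm
        rw [rProc_succ_pos hjump, rProc_zero]
      · exfalso
        have h01 := hmono ⟨0, by omega⟩ ⟨1, by omega⟩ (by simp [Fin.lt_def])
        have ha := (hf ⟨0, by omega⟩).2.2.1
        have hb := (hf ⟨1, by omega⟩).2.2.1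
        omega
    · intro h
      have h1 := rProc_le_succ marked 0 k
      rw [rProc_zero] at h1
      have hz : z = 0 := by omega
      subst hz
      have hjump : Jump marked 0 k := by
        by_contra hnj
        rw [rProc_succ_neg hnj, rProc_zero] at h
        omega
      obtain ⟨k', hk1, hk2, hk3, hk4⟩ := hjump
      rw [rProc_zero] at hk4
      refine ⟨fun _ => (k', 0), fun i => ⟨hk1, show k' ≤ k + 0 by omega, le_refl _, hk4⟩, ?_⟩
      intro i j hij
      exfalso
      have hi := i.isLt
      have hj := j.isLt
      have hij' : (i : ℕ) < (j : ℕ) := hij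
      omega
  | succ t ih =>
    intro k z hk
    constructor
    · rintro ⟨f, hf, hmono⟩
      have hlast := hf (Fin.last z)
      set p := (f (Fin.last z)).1 with hp
      set j := (f (Fin.last z)).2 with hj
      have hp1 : 1 ≤ p := hlast.1
      have hps : p ≤ k + z := hlast.2.1
      have hjt : j ≤ t + 1 := hlast.2.2.1
      have hpz : z + 1 ≤ p := by
        exact PSeq_first_ge hf hmono z (by omega)
      by_cases hjc : j ≤ t
      · -- whole sequence lives in times ≤ t
        have hPt : PSeq marked (k + z) t (z + 1) := by
          refine ⟨f, ?_, hmono⟩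
          intro i
          refine ⟨(hf i).1, (hf i).2.1, ?_, (hf i).2.2.2⟩
          by_cases hi : (i : ℕ) = z
          · have : i = Fin.last z := Fin.ext hi
            rw [this]; exact hjc
          · have hilt : i < Fin.last z := by
              have := i.isLt
              simp only [Fin.lt_def, Fin.val_last]
              omega
            have := (hmono i (Fin.last z) hilt).2
            omega
        have h1 := (ih k z hk).mp hPt
        have h2 := rProc_mono_t marked (t + 1) k
        omega
      · have hj1 : j = t + 1 := by omega
        -- prefix of length z in {1,…,p-1} × {0,…,t}
        have hpre : PSeq marked (p - 1) t z := by
          refine ⟨fun i => f (Fin.castSucc i), ?_, ?_⟩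
          · intro i
            show 1 ≤ (f i.castSucc).1 ∧ (f i.castSucc).1 ≤ p - 1 ∧
              (f i.castSucc).2 ≤ t ∧ marked (f i.castSucc)
            have hi1 := hf i.castSucc
            have hlt := hmono i.castSucc (Fin.last z) (Fin.castSucc_lt_last i)
            exact ⟨hi1.1, by omega, by omega, hi1.2.2.2⟩
          · intro i j' hij
            show (f i.castSucc).1 < (f j'.castSucc).1 ∧
              (f i.castSucc).2 < (f j'.castSucc).2
            exact hmono _ _ (Fin.castSucc_lt_castSucc_iff.mpr hij)
        have hRk'' : p ≤ rProc marked (t + 1) (p - z) := by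
          rcases Nat.eq_zero_or_pos z with rfl | hz
          · exact rProc_ge marked (t + 1) p
          · have harg : PSeq marked ((p - z) + (z - 1)) t ((z - 1) + 1) := by
              have e1 : (p - z) + (z - 1) = p - 1 := by omega
              have e2 : (z - 1) + 1 = z := by omega
              rw [e1, e2]; exact hpre
            have := (ih (p - z) (z - 1) (by omega)).mp harg
            omega
        have hgap := rProc_gap marked (t + 1) (k + z - p) (p - z)
        have hkz : (p - z) + (k + z - p) = k := by omega
        rw [hkz] at hgap
        by_cases hcase : k + z + 1 ≤ rProc marked (t + 1) k
        · have := rProc_mono_t marked (t + 1) k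
          omega
        · have hRkeq : rProc marked (t + 1) k = k + z := by omega
          have hR'' : rProc marked (t + 1) (p - z) = p := by omega
          have hmarked : marked (p, t + 1) := by
            have : f (Fin.last z) = (p, j) := rfl
            have hm := hlast.2.2.2
            rw [this, hj1] at hm
            exact hm
          have hjump : Jump marked (t + 1) k := by
            refine ⟨p - z, by omega, by omega, by rw [hR'', hRkeq]; omega, ?_⟩
            rw [hR'']
            exact hmarked
          rw [rProc_succ_pos hjump, hRkeq]
    · intro h
      by_cases hcase : k + z + 1 ≤ rProc marked (t + 1) k
      · exact PSeq_mono_t ((ih k z hk).mpr hcase)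
      · have hle := rProc_le_succ marked (t + 1) k
        have hReq : rProc marked (t + 1) k = k + z := by omega
        have hjump : Jump marked (t + 1) k := by
          by_contra hnj
          rw [rProc_succ_neg hnj] at h
          omega
        obtain ⟨k', hk1, hk2, hk3, hk4⟩ := hjump
        have hgek : k ≤ rProc marked (t + 1) k := rProc_ge marked (t + 1) k
        have hpeq : rProc marked (t + 1) k' = k' + z := by
          rw [hk3, hReq]; omega
        rw [hpeq] at hk4
        have hpre : PSeq marked (k' + z - 1) t z := by
          rcases Nat.eq_zero_or_pos z with rfl | hz
          · exact PSeq_zero marked _ t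
          · have := (ih k' (z - 1) hk1).mpr (by rw [hpeq]; omega)
            have e1 : k' + (z - 1) = k' + z - 1 := by omega
            have e2 : (z - 1) + 1 = z := by omega
            rw [e1, e2] at this
            exact this
        exact PSeq_snoc hpre hk4 (by omega) (by omega) (by omega)

lemma le_LIP'_iff (marked : ℕ × ℕ → Prop) (s t y : ℕ) :
    y ≤ LIP' marked s t ↔ PSeq marked s t y := by
  have hbdd : BddAbove {y | PSeq marked s t y} := ⟨s, fun x hx => PSeq_bound hx⟩
  rw [LIP'_eq]
  constructor
  · intro h
    have hne : {y | PSeq marked s t y}.Nonempty := ⟨0, PSeq_zero marked s t⟩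
    have hmem := Nat.sSup_mem hne hbdd
    exact PSeq_mono_y h hmem
  · intro h
    exact le_csSup hbdd h

/-- Lemma 4.1: for `1 ≤ y ≤ s`, `L'(s,t) ≥ y` iff particle `s - y + 1` jumps to the right
at least `y` times during the first `t+1` time-steps, i.e. iff `r_{s-y+1}(t+1) ≥ s + 1`. -/
theorem LIP'_ge_iff_particle_jumps (marked : ℕ × ℕ → Prop) (s t y : ℕ)
    (hy : 1 ≤ y) (hys : y ≤ s) :
    y ≤ LIP' marked s t ↔ s + 1 ≤ rProc marked (t + 1) (s - y + 1) := by
  have h := main_aux marked t (s - y + 1) (y - 1) (by omega)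
  have e1 : (s - y + 1) + (y - 1) = s := by omega
  have e2 : (y - 1) + 1 = y := by omega
  rw [e1, e2] at h
  rw [le_LIP'_iff]
  exact h
end

section
/- Fix p ∈ (0,1), q = 1 − p. Let {Ỹ_{ij}}_{i,j≥1} be i.i.d. with ℙ(Ỹ = s) = q·pˢ for s ∈ ℤ₊, and define τ(i,j) by τ(i,j) = ((τ(i−1,j)+1) ∨ τ(i,j−1)) + Ỹ_{ij} with τ(0,j) = τ(i,0) = 0. Let {Y_v}_{v∈ℕ²} be i.i.d. with ℙ(Y = s) = q·p^{s−1} for s ∈ ℕ, and let G(i,j) be the last-passage time G(i,j) = max over up-right paths π from (1,1) to (i,j) of Σ_{v∈π} Y_v. Then for every i,j ≥ 1, τ(i,j) has the same distribution as G(i,j) − j + 1. -/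
open MeasureTheory ProbabilityTheory

/-- The recursion `τ(i,j) = ((τ(i-1,j) + 1) ⊔ τ(i,j-1)) + Ỹ_{ij}` with boundary
conditions `τ(0,j) = τ(i,0) = 0`, for `ℕ`-valued weights. -/
noncomputable def tauRecN (Y : ℕ × ℕ → ℕ) : ℕ → ℕ → ℕ
  | 0, _ => 0
  | _ + 1, 0 => 0
  | i + 1, j + 1 =>
      max (tauRecN Y i (j + 1) + 1) (tauRecN Y (i + 1) j) + Y (i + 1, j + 1)
  termination_by i j => (i, j)

/-- `IsUpRightPath f len m n` : `f 0, f 1, …, f (len - 1)` is an up-right lattice path from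
`(1,1)` to `(m,n)`, each step increasing exactly one coordinate by 1. -/
def IsUpRightPath (f : ℕ → ℕ × ℕ) (len m n : ℕ) : Prop :=
  f 0 = (1, 1) ∧ f (len - 1) = (m, n) ∧
    ∀ k, k + 1 < len →
      f (k + 1) = ((f k).1 + 1, (f k).2) ∨ f (k + 1) = ((f k).1, (f k).2 + 1)

/-- Last-passage time over up-right paths, `ℕ`-valued weights. -/
noncomputable def GN (Y : ℕ × ℕ → ℕ) (m n : ℕ) : ℕ :=
  sSup {S : ℕ | ∃ f : ℕ → ℕ × ℕ, IsUpRightPath f (m + n - 1) m n ∧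
    S = ∑ k ∈ Finset.range (m + n - 1), Y (f k)}


/-!
The last-passage time obeys `G(i,j) = max(G(i-1,j), G(i,j-1)) + Y_{ij}`, the maximum being
attained by extending an optimal path to one of the two predecessors. For weights `Y = Ỹ + 1`
the shifted quantity `G(i,j) - j + 1` then satisfies exactly the recursion of `τ`: the shift by
`j` is what produces the `+1` on `τ(i-1,j)`. Hence `τ(i,j)` and `G(i,j) - j + 1` are the same
measurable function of the weight fields `Ỹ` and `Y - 1` respectively. Both laws are read off
from `ℙ(Y = s + 1) = ℙ(Ỹ = s)`; summing over `s` forces `Y ≥ 1` almost surely, so `Y - 1` has the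
marginal of `Ỹ`, and independence turns equal marginals into equal joint laws.
-/

noncomputable def lastPassageRec (w : ℕ × ℕ → ℕ) : ℕ → ℕ → ℕ
  | 0, _ => 0
  | _ + 1, 0 => 0
  | i + 1, j + 1 =>
      max (lastPassageRec w i (j + 1)) (lastPassageRec w (i + 1) j) + w (i + 1, j + 1)
  termination_by i j => (i, j)

section LastPassage

variable (w : ℕ × ℕ → ℕ)

lemma lastPassageRec_one_one : lastPassageRec w 1 1 = w (1, 1) := by
  simp [lastPassageRec]

lemma lastPassageRec_add_le_succ_left {a b : ℕ} (hb : 1 ≤ b) :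
    lastPassageRec w a b + w (a + 1, b) ≤ lastPassageRec w (a + 1) b := by
  obtain ⟨b, rfl⟩ := Nat.exists_eq_add_of_le' hb
  rw [lastPassageRec]
  exact Nat.add_le_add_right (le_max_left _ _) _

lemma lastPassageRec_add_le_succ_right {a b : ℕ} (ha : 1 ≤ a) :
    lastPassageRec w a b + w (a, b + 1) ≤ lastPassageRec w a (b + 1) := by
  obtain ⟨a, rfl⟩ := Nat.exists_eq_add_of_le' ha
  rw [lastPassageRec]
  exact Nat.add_le_add_right (le_max_right _ _) _

lemma exists_pred_lastPassageRec {m n : ℕ} (hm : 1 ≤ m) (hn : 1 ≤ n) (h : 3 ≤ m + n) :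
    ∃ a b, 1 ≤ a ∧ 1 ≤ b ∧ ((m, n) = (a + 1, b) ∨ (m, n) = (a, b + 1)) ∧
      lastPassageRec w m n = lastPassageRec w a b + w (m, n) := by
  obtain ⟨m, rfl⟩ := Nat.exists_eq_add_of_le' hm
  obtain ⟨n, rfl⟩ := Nat.exists_eq_add_of_le' hn
  rw [lastPassageRec]
  rcases Nat.eq_zero_or_pos m with rfl | hm
  · refine ⟨1, n, le_rfl, by omega, Or.inr rfl, ?_⟩
    simp [lastPassageRec]
  rcases Nat.eq_zero_or_pos n with rfl | hn
  · refine ⟨m, 1, hm, le_rfl, Or.inl rfl, ?_⟩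
    simp [lastPassageRec]
  rcases le_total (lastPassageRec w m (n + 1)) (lastPassageRec w (m + 1) n) with hle | hle
  · exact ⟨m + 1, n, by omega, hn, Or.inr rfl, by rw [max_eq_right hle]⟩
  · exact ⟨m, n + 1, hm, by omega, Or.inl rfl, by rw [max_eq_left hle]⟩

end LastPassage

namespace IsUpRightPath

variable {f : ℕ → ℕ × ℕ} {len m n L a b : ℕ}

lemma one_le_apply (hf : IsUpRightPath f len m n) {k : ℕ} (hk : k < len) : (1, 1) ≤ f k := by
  induction k with
  | zero => exact hf.1.ge
  | succ k ih =>
    refine (ih (by omega)).trans ?_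
    rcases hf.2.2 k hk with h | h <;> simp [h, Prod.le_def]

lemma sum_range_le_lastPassageRec (w : ℕ × ℕ → ℕ) (hf : IsUpRightPath f len m n) {k : ℕ}
    (hk : k < len) : ∑ t ∈ Finset.range (k + 1), w (f t) ≤ lastPassageRec w (f k).1 (f k).2 := by
  induction k with
  | zero => simp [hf.1, lastPassageRec_one_one]
  | succ k ih =>
    have hpos := Prod.mk_le_mk.1 (hf.one_le_apply (k := k) (by omega))
    rw [Finset.sum_range_succ]
    refine (Nat.add_le_add_right (ih (by omega)) _).trans ?_
    rcases hf.2.2 k hk with h | h <;> rw [h]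
    · exact lastPassageRec_add_le_succ_left w hpos.2
    · exact lastPassageRec_add_le_succ_right w hpos.1

lemma update_succ (hf : IsUpRightPath f (L + 1) a b) {v : ℕ × ℕ}
    (hv : v = (a + 1, b) ∨ v = (a, b + 1)) :
    IsUpRightPath (Function.update f (L + 1) v) (L + 2) v.1 v.2 := by
  refine ⟨by rw [Function.update_of_ne (by omega)]; exact hf.1, by simp, fun k hk => ?_⟩
  rw [Function.update_of_ne (by omega : k ≠ L + 1)]
  rcases Nat.lt_or_ge (k + 1) (L + 1) with hk' | hk'
  · rw [Function.update_of_ne (by omega)]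
    exact hf.2.2 k hk'
  · obtain rfl : k = L := by omega
    have hfL : f k = (a, b) := hf.2.1
    rw [Function.update_self, hfL]
    exact hv

end IsUpRightPath

lemma exists_isUpRightPath_sum_eq_lastPassageRec (w : ℕ × ℕ → ℕ) (L : ℕ) :
    ∀ m n, 1 ≤ m → 1 ≤ n → m + n = L + 2 → ∃ f, IsUpRightPath f (L + 1) m n ∧
      ∑ k ∈ Finset.range (L + 1), w (f k) = lastPassageRec w m n := by
  induction L with
  | zero =>
    intro m n hm hn hmn
    obtain ⟨rfl, rfl⟩ : m = 1 ∧ n = 1 := by omega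
    exact ⟨fun _ => (1, 1), ⟨rfl, rfl, by omega⟩, by simp [lastPassageRec_one_one]⟩
  | succ L ih =>
    intro m n hm hn hmn
    obtain ⟨a, b, ha, hb, hstep, hrec⟩ := exists_pred_lastPassageRec w hm hn (by omega)
    obtain ⟨f, hf, hsum⟩ := ih a b ha hb (by rcases hstep with h | h <;> simp only [Prod.mk.injEq] at h <;> omega)
    refine ⟨Function.update f (L + 1) (m, n), hf.update_succ hstep, ?_⟩
    rw [Finset.sum_range_succ, Function.update_self, hrec, ← hsum]
    congr 1
    refine Finset.sum_congr rfl fun k hk => ?_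
    rw [Function.update_of_ne (Finset.mem_range.1 hk).ne]

theorem GN_eq_lastPassageRec (w : ℕ × ℕ → ℕ) {m n : ℕ} (hm : 1 ≤ m) (hn : 1 ≤ n) :
    GN w m n = lastPassageRec w m n := by
  obtain ⟨L, hL⟩ : ∃ L, m + n - 1 = L + 1 := ⟨m + n - 2, by omega⟩
  refine IsGreatest.csSup_eq ⟨?_, ?_⟩
  · obtain ⟨f, hf, hsum⟩ := exists_isUpRightPath_sum_eq_lastPassageRec w L m n hm hn (by omega)
    exact ⟨f, hL ▸ hf, by rw [hL, hsum]⟩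
  · rintro S ⟨f, hf, rfl⟩
    rw [hL] at hf ⊢
    have hfL : f L = (m, n) := hf.2.1
    simpa [hfL] using hf.sum_range_le_lastPassageRec w (k := L) (by omega)

lemma one_le_tauRecN (w : ℕ × ℕ → ℕ) (i j : ℕ) : 1 ≤ tauRecN w (i + 1) (j + 1) := by
  rw [tauRecN]
  have := le_max_left (tauRecN w i (j + 1) + 1) (tauRecN w (i + 1) j)
  omega

lemma lastPassageRec_add_one_eq_tauRecN (w : ℕ × ℕ → ℕ) (i j : ℕ) :
    lastPassageRec (fun v => w v + 1) (i + 1) (j + 1) = tauRecN w (i + 1) (j + 1) + j := by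
  induction i generalizing j with
  | zero =>
    induction j with
    | zero => simp [lastPassageRec, tauRecN, add_comm]
    | succ j ih =>
      have := one_le_tauRecN w 0 j
      rw [lastPassageRec, tauRecN, ih]
      simp only [lastPassageRec, tauRecN]
      omega
  | succ i ih =>
    induction j with
    | zero =>
      rw [lastPassageRec, tauRecN, ih]
      simp only [lastPassageRec, tauRecN]
      omega
    | succ j ihj =>
      have := one_le_tauRecN w (i + 1) j
      rw [lastPassageRec, tauRecN, ih, ihj]
      omega

theorem tauRecN_eq_GN_add_one_sub (w : ℕ × ℕ → ℕ) {i j : ℕ} (hi : 1 ≤ i) (hj : 1 ≤ j) :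
    tauRecN w i j = GN (fun v => w v + 1) i j - j + 1 := by
  obtain ⟨i, rfl⟩ := Nat.exists_eq_add_of_le' hi
  obtain ⟨j, rfl⟩ := Nat.exists_eq_add_of_le' hj
  have := one_le_tauRecN w i j
  rw [GN_eq_lastPassageRec _ hi hj, lastPassageRec_add_one_eq_tauRecN]
  omega

theorem measurable_tauRecN (i j : ℕ) : Measurable fun w : ℕ × ℕ → ℕ => tauRecN w i j := by
  induction i, j using tauRecN.induct with
  | case1 => simp [tauRecN]
  | case2 => simp [tauRecN]
  | case3 i j ih₁ ih₂ =>
    simp only [tauRecN]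
    fun_prop

section Distribution

variable {Ω Ω' : Type*} [MeasurableSpace Ω] [MeasurableSpace Ω'] {μ : Measure Ω} {μ' : Measure Ω'}

lemma tsum_measure_setOf_eq {β : Type*} [Countable β] [MeasurableSpace β]
    [MeasurableSingletonClass β] {X : Ω → β} (hX : Measurable X) :
    ∑' b, μ {ω | X ω = b} = μ Set.univ := by
  change ∑' b, μ (X ⁻¹' {b}) = _
  rw [← measure_iUnion (pairwise_disjoint_fiber X) fun b => hX (measurableSet_singleton b)]
  congr 1
  ext ω
  simp

lemma measure_eq_zero_of_measure_succ_eq [IsProbabilityMeasure μ] [IsProbabilityMeasure μ']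
    {X : Ω → ℕ} {X' : Ω' → ℕ} (hX : Measurable X) (hX' : Measurable X')
    (h : ∀ s, μ {ω | X ω = s + 1} = μ' {ω | X' ω = s}) : μ {ω | X ω = 0} = 0 := by
  have htotal := tsum_measure_setOf_eq (μ := μ) hX
  rw [tsum_eq_zero_add' ENNReal.summable, funext h, tsum_measure_setOf_eq hX', measure_univ,
    measure_univ] at htotal
  exact (ENNReal.add_left_inj ENNReal.one_ne_top).1 (htotal.trans (zero_add 1).symm)

lemma identDistrib_sub_one_of_measure_succ_eq {X : Ω → ℕ} {X' : Ω' → ℕ} (hX : Measurable X)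
    (hX' : Measurable X') (h₀ : μ {ω | X ω = 0} = 0)
    (h : ∀ s, μ {ω | X ω = s + 1} = μ' {ω | X' ω = s}) :
    IdentDistrib (fun ω => X ω - 1) X' μ μ' := by
  have hpred : Measurable fun ω => X ω - 1 := (measurable_of_countable fun n : ℕ => n - 1).comp hX
  refine ⟨hpred.aemeasurable, hX'.aemeasurable, Measure.ext_of_singleton fun s => ?_⟩
  rw [Measure.map_apply hpred (measurableSet_singleton s),
    Measure.map_apply hX' (measurableSet_singleton s)]
  rcases s with _ | s
  · have hfiber : (fun ω => X ω - 1) ⁻¹' {0} = {ω | X ω = 0} ∪ {ω | X ω = 0 + 1} := by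
      ext ω
      simp only [Set.mem_preimage, Set.mem_singleton_iff, Set.mem_union, Set.mem_ofPred_eq]
      omega
    rw [hfiber]
    exact (le_antisymm ((measure_union_le _ _).trans (by rw [h₀, zero_add]))
      (measure_mono Set.subset_union_right)).trans (h 0)
  · have hfiber : (fun ω => X ω - 1) ⁻¹' {s + 1} = {ω | X ω = s + 1 + 1} := by
      ext ω
      simp only [Set.mem_preimage, Set.mem_singleton_iff, Set.mem_ofPred_eq]
      omega
    rw [hfiber]
    exact h (s + 1)

lemma identDistrib_pi_of_iIndepFun {ι α : Type*} [MeasurableSpace α] {X : ι → Ω → α}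
    {X' : ι → Ω' → α} (hX : ∀ i, Measurable (X i)) (hX' : ∀ i, Measurable (X' i))
    (hind : iIndepFun X μ) (hind' : iIndepFun X' μ') (h : ∀ i, IdentDistrib (X i) (X' i) μ μ') :
    IdentDistrib (fun ω i => X i ω) (fun ω i => X' i ω) μ μ' where
  aemeasurable_fst := (measurable_pi_lambda _ hX).aemeasurable
  aemeasurable_snd := (measurable_pi_lambda _ hX').aemeasurable
  map_eq := by
    rw [hind.map_fun_eq_infinitePi_map hX, hind'.map_fun_eq_infinitePi_map hX']
    congr 1
    exact funext fun i => (h i).map_eq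

end Distribution

theorem tauRec_identDistrib_lastPassage_general
    {Ω : Type*} [MeasureSpace Ω] [IsProbabilityMeasure (ℙ : Measure Ω)]
    (p : ℝ)
    (Yt : ℕ × ℕ → Ω → ℕ) (hYtmeas : ∀ v, Measurable (Yt v))
    (hYtindep : iIndepFun Yt ℙ)
    (hYtdist : ∀ v s, ℙ {ω | Yt v ω = s} = ENNReal.ofReal ((1 - p) * p ^ s))
    (Y : ℕ × ℕ → Ω → ℕ) (hYmeas : ∀ v, Measurable (Y v))
    (hYindep : iIndepFun Y ℙ)
    (hYdist : ∀ v s, 1 ≤ s → ℙ {ω | Y v ω = s} = ENNReal.ofReal ((1 - p) * p ^ (s - 1)))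
    (i j : ℕ) (hi : 1 ≤ i) (hj : 1 ≤ j) :
    IdentDistrib (fun ω => tauRecN (fun v => Yt v ω) i j)
      (fun ω => GN (fun v => Y v ω) i j - j + 1) ℙ ℙ := by
  have hsucc v s : ℙ {ω | Y v ω = s + 1} = ℙ {ω | Yt v ω = s} := by
    rw [hYdist v (s + 1) (by omega), hYtdist, Nat.add_sub_cancel]
  have hY₀ v : ℙ {ω | Y v ω = 0} = 0 :=
    measure_eq_zero_of_measure_succ_eq (hYmeas v) (hYtmeas v) (hsucc v)
  have hpred : Measurable fun n : ℕ => n - 1 := measurable_of_countable _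
  have hlaw : IdentDistrib (fun ω v => Y v ω - 1) (fun ω v => Yt v ω) ℙ ℙ :=
    identDistrib_pi_of_iIndepFun (fun v => hpred.comp (hYmeas v)) hYtmeas
      (hYindep.comp _ fun _ => hpred) hYtindep fun v =>
        identDistrib_sub_one_of_measure_succ_eq (hYmeas v) (hYtmeas v) (hY₀ v) (hsucc v)
  have hpos : ∀ᵐ ω ∂ℙ, ∀ v, Y v ω ≠ 0 := ae_all_iff.2 fun v => ae_iff.2 (by simpa using hY₀ v)
  have hτ := hlaw.comp (measurable_tauRecN i j)
  refine hτ.symm.trans (IdentDistrib.of_ae_eq hτ.aemeasurable_fst ?_)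
  filter_upwards [hpos] with ω hω
  have hshift : (fun v => Y v ω) = fun v => (Y v ω - 1) + 1 :=
    funext fun v => (Nat.succ_pred_eq_of_ne_zero (hω v)).symm
  rw [hshift]
  exact tauRecN_eq_GN_add_one_sub _ hi hj

/-- Lemma 5.1: with i.i.d. `Ỹ ~ Geom₀(q)` (`ℙ(Ỹ = s) = q pˢ`, `s ≥ 0`) driving the
recursion `τ`, and i.i.d. `Y ~ Geom₁(q)` (`ℙ(Y = s) = q p^{s-1}`, `s ≥ 1`) driving the
last-passage times `G`, we have `τ(i,j) =_𝒟 G(i,j) - j + 1`. -/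
theorem tauRec_identDistrib_lastPassage
    {Ω : Type*} [MeasureSpace Ω] [IsProbabilityMeasure (ℙ : Measure Ω)]
    (p : ℝ) (hp0 : 0 < p) (hp1 : p < 1)
    (Yt : ℕ × ℕ → Ω → ℕ) (hYtmeas : ∀ v, Measurable (Yt v))
    (hYtindep : iIndepFun Yt ℙ)
    (hYtdist : ∀ v s, ℙ {ω | Yt v ω = s} = ENNReal.ofReal ((1 - p) * p ^ s))
    (Y : ℕ × ℕ → Ω → ℕ) (hYmeas : ∀ v, Measurable (Y v))
    (hYindep : iIndepFun Y ℙ)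
    (hYdist : ∀ v s, 1 ≤ s → ℙ {ω | Y v ω = s} = ENNReal.ofReal ((1 - p) * p ^ (s - 1)))
    (i j : ℕ) (hi : 1 ≤ i) (hj : 1 ≤ j) :
    IdentDistrib (fun ω => tauRecN (fun v => Yt v ω) i j)
      (fun ω => GN (fun v => Y v ω) i j - j + 1) ℙ ℙ :=
  tauRec_identDistrib_lastPassage_general p Yt hYtmeas hYtindep hYtdist Y hYmeas hYindep hYdist i j
    hi hj
end

section
/- Fix p ∈ (0,1), let {X_v}_{v∈ℕ²} be i.i.d. Bernoulli(p) site marks, and let L(m,n) be the maximal cardinality of a strictly increasing path of marked sites in [m]×[n]. Then n⁻¹ L(⌊p⁻¹n⌋, n) → 1 almost surely as n → ∞; that is, in the rectangle [⌊p⁻¹n⌋]×[n] there is with probability one a strictly increasing path collecting n − o(n) marked sites. -/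
open MeasureTheory ProbabilityTheory Filter

/-- Maximal cardinality of a strictly increasing path of marked sites in `[m] × [n]`. -/
noncomputable def LIP (marked : ℕ × ℕ → Prop) (m n : ℕ) : ℕ :=
  sSup {k : ℕ | ∃ f : Fin k → ℕ × ℕ,
    (∀ i, 1 ≤ (f i).1 ∧ (f i).1 ≤ m ∧ 1 ≤ (f i).2 ∧ (f i).2 ≤ n ∧ marked (f i)) ∧
    ∀ i j : Fin k, i < j → (f i).1 < (f j).1 ∧ (f i).2 < (f j).2}

/-!
Scan the columns greedily: in column `t + 1` inspect the site in the current row, and if it is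
marked take it and move one row up. Every inspection looks at a fresh column, so the successes
are Bernoulli(`p`) and pairwise independent, and by Etemadi's strong law about `p ⌊n / p⌋ ≈ n`
of the first `⌊n / p⌋` inspections succeed. The sites taken form an increasing path, so
`L(⌊n / p⌋, n) ≥ n - o(n)`, while `L(m, n) ≤ n` always.
-/

open Topology

def IsIncreasingPath (marked : ℕ × ℕ → Prop) (m n : ℕ) {k : ℕ} (f : Fin k → ℕ × ℕ) : Prop :=
  (∀ i, 1 ≤ (f i).1 ∧ (f i).1 ≤ m ∧ 1 ≤ (f i).2 ∧ (f i).2 ≤ n ∧ marked (f i)) ∧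
    ∀ i j : Fin k, i < j → (f i).1 < (f j).1 ∧ (f i).2 < (f j).2

section IncreasingPath

variable {marked : ℕ × ℕ → Prop} {m n k : ℕ} {f : Fin k → ℕ × ℕ}

theorem IsIncreasingPath.length_le (hf : IsIncreasingPath marked m n f) : k ≤ n := by
  have hrows : StrictMono fun i => (f i).2 := fun i j hij => (hf.2 i j hij).2
  simpa using Finset.card_le_card_of_injOn (fun i => (f i).2) (s := Finset.univ)
    (t := Finset.Icc 1 n) (fun i _ => Finset.mem_Icc.2 ⟨(hf.1 i).2.2.1, (hf.1 i).2.2.2.1⟩)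
    hrows.injective.injOn

theorem IsIncreasingPath.mono {m' n' : ℕ} (hf : IsIncreasingPath marked m n f) (hm : m ≤ m')
    (hn : n ≤ n') : IsIncreasingPath marked m' n' f :=
  ⟨fun i => let ⟨h1, hm', h2, hn', hmarked⟩ := hf.1 i
    ⟨h1, hm'.trans hm, h2, hn'.trans hn, hmarked⟩, hf.2⟩

theorem IsIncreasingPath.le_LIP (hf : IsIncreasingPath marked m n f) : k ≤ LIP marked m n :=
  le_csSup ⟨n, fun _ ⟨_, hg⟩ => IsIncreasingPath.length_le hg⟩ ⟨f, hf⟩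

theorem LIP_le : LIP marked m n ≤ n :=
  csSup_le' fun _ ⟨_, hg⟩ => IsIncreasingPath.length_le hg

theorem LIP_mono {m' n' : ℕ} (hm : m ≤ m') (hn : n ≤ n') : LIP marked m n ≤ LIP marked m' n' :=
  csSup_le' fun _ ⟨_, hg⟩ => (IsIncreasingPath.mono hg hm hn).le_LIP

end IncreasingPath

def greedyRow (marks : ℕ × ℕ → Bool) : ℕ → ℕ
  | 0 => 1
  | t + 1 => greedyRow marks t + if marks (t + 1, greedyRow marks t) then 1 else 0

def greedyBit (marks : ℕ × ℕ → Bool) (t : ℕ) : Bool :=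
  marks (t + 1, greedyRow marks t)

def greedyCount (marks : ℕ × ℕ → Bool) (M : ℕ) : ℕ :=
  ((Finset.range M).filter fun t => greedyBit marks t = true).card

section Greedy

variable (marks : ℕ × ℕ → Bool)

theorem greedyRow_succ (t : ℕ) :
    greedyRow marks (t + 1) = greedyRow marks t + if greedyBit marks t then 1 else 0 := rfl

theorem greedyRow_eq_greedyCount_add_one (t : ℕ) :
    greedyRow marks t = greedyCount marks t + 1 := by
  induction t with
  | zero => rfl
  | succ t ih =>
    rw [greedyRow_succ, ih, greedyCount, greedyCount, Finset.range_add_one, Finset.filter_insert]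
    split_ifs with h
    · rw [Finset.card_insert_of_notMem (by simp)]
    · rfl

theorem greedyRow_mono : Monotone (greedyRow marks) :=
  monotone_nat_of_le_succ fun _ => Nat.le_add_right _ _

theorem greedyCount_le_LIP (M : ℕ) :
    greedyCount marks M ≤ LIP (fun v => marks v = true) M (greedyCount marks M) := by
  set T := (Finset.range M).filter fun t => greedyBit marks t = true
  set e := T.orderEmbOfFin rfl
  have he (i) : e i < M ∧ greedyBit marks (e i) = true := by
    obtain ⟨hi, hbit⟩ := Finset.mem_filter.1 (T.orderEmbOfFin_mem rfl i)
    exact ⟨Finset.mem_range.1 hi, hbit⟩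
  have hstep (i) : greedyRow marks (e i + 1) = greedyRow marks (e i) + 1 := by
    simp [greedyRow_succ, (he i).2]
  show T.card ≤ LIP _ M T.card
  refine IsIncreasingPath.le_LIP (f := fun i => (e i + 1, greedyRow marks (e i)))
    ⟨fun i => ?_, ?_⟩
  · have hlast : greedyRow marks (e i + 1) ≤ greedyRow marks M := greedyRow_mono marks (he i).1
    have hfirst : greedyRow marks 0 ≤ greedyRow marks (e i) :=
      greedyRow_mono marks (Nat.zero_le _)
    have hM : greedyRow marks M = T.card + 1 := greedyRow_eq_greedyCount_add_one marks M
    have h0 : greedyRow marks 0 = 1 := rfl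
    have := hstep i
    dsimp only
    exact ⟨by omega, (he i).1, by omega, by omega, (he i).2⟩
  · intro i j hij
    have hlt : e i < e j := e.strictMono hij
    have := greedyRow_mono marks (show e i + 1 ≤ e j from hlt)
    have := hstep i
    exact ⟨by simpa using hlt, by dsimp only; omega⟩

theorem min_greedyCount_le_LIP (n M : ℕ) :
    min n (greedyCount marks M) ≤ LIP (fun v => marks v = true) M n := by
  induction M with
  | zero => simp [greedyCount]
  | succ M ih =>
    by_cases hc : greedyCount marks (M + 1) ≤ n
    · rw [min_eq_right hc]
      exact (greedyCount_le_LIP marks _).trans (LIP_mono le_rfl hc)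
    · have hsucc := greedyRow_succ marks M
      simp only [greedyRow_eq_greedyCount_add_one] at hsucc
      have : n ≤ greedyCount marks M := by split at hsucc <;> omega
      rw [min_eq_left (by omega)]
      exact (min_eq_left this ▸ ih).trans (LIP_mono M.le_succ le_rfl)

end Greedy

theorem tendsto_div_of_min_le_of_le {p : ℝ} (hp : 0 < p) {c L : ℕ → ℕ}
    (hc : Tendsto (fun M : ℕ => (c M : ℝ) / M) atTop (𝓝 p))
    (hlow : ∀ n, min n (c ⌊p⁻¹ * n⌋₊) ≤ L n) (hup : ∀ n, L n ≤ n) :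
    Tendsto (fun n : ℕ => (L n : ℝ) / n) atTop (𝓝 1) := by
  have hM : Tendsto (fun n : ℕ => ⌊p⁻¹ * n⌋₊) atTop atTop :=
    tendsto_nat_floor_atTop.comp (tendsto_natCast_atTop_atTop.const_mul_atTop (inv_pos.2 hp))
  have hMn : Tendsto (fun n : ℕ => (⌊p⁻¹ * n⌋₊ : ℝ) / n) atTop (𝓝 p⁻¹) :=
    (tendsto_nat_floor_mul_div_atTop (inv_nonneg.2 hp.le)).comp tendsto_natCast_atTop_atTop
  have hcn : Tendsto (fun n : ℕ => (c ⌊p⁻¹ * n⌋₊ : ℝ) / n) atTop (𝓝 1) := by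
    have := (hc.comp hM).mul hMn
    rw [mul_inv_cancel₀ hp.ne'] at this
    refine this.congr' ((hM.eventually_ne_atTop 0).mono fun n hn => ?_)
    exact div_mul_div_cancel₀ (Nat.cast_ne_zero.2 hn)
  have hmin : Tendsto (fun n : ℕ => min 1 ((c ⌊p⁻¹ * n⌋₊ : ℝ) / n)) atTop (𝓝 1) := by
    simpa using (tendsto_const_nhds (x := (1 : ℝ))).min hcn
  refine tendsto_of_tendsto_of_tendsto_of_le_of_le' hmin tendsto_const_nhds ?_
    (Eventually.of_forall fun n => div_le_one_of_le₀ (by exact_mod_cast hup n) n.cast_nonneg)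
  filter_upwards [eventually_gt_atTop 0] with n hn
  have hn' : (0 : ℝ) < n := by exact_mod_cast hn
  rw [← div_self hn'.ne', min_div_div_right hn'.le]
  gcongr
  exact_mod_cast hlow n

theorem measurable_apply_index {Ω β : Type*} {mΩ : MeasurableSpace Ω} [MeasurableSpace β]
    {Y : ℕ → Ω → β} (hY : ∀ j, Measurable (Y j)) {J : Ω → ℕ} (hJ : Measurable J) :
    Measurable fun ω => Y (J ω) ω :=
  (measurable_from_prod_countable_left (f := fun q : Ω × ℕ => Y q.2 q.1) hY).comp
    (measurable_id.prodMk hJ)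

theorem identDistrib_indicator_const {Ω M : Type*} {mΩ : MeasurableSpace Ω} {μ : Measure Ω}
    [IsProbabilityMeasure μ] [Zero M] [MeasurableSpace M] (c : M) {A B : Set Ω}
    (hA : MeasurableSet A) (hB : MeasurableSet B) (hAB : μ A = μ B) :
    IdentDistrib (A.indicator fun _ => c) (B.indicator fun _ => c) μ μ := by
  classical
  refine ⟨(measurable_const.indicator hA).aemeasurable,
    (measurable_const.indicator hB).aemeasurable, Measure.ext fun s hs => ?_⟩
  rw [Measure.map_apply (measurable_const.indicator hA) hs,
    Measure.map_apply (measurable_const.indicator hB) hs,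
    Set.indicator_const_preimage_eq_union, Set.indicator_const_preimage_eq_union]
  split_ifs <;> simp [hAB, prob_compl_eq_one_sub hA, prob_compl_eq_one_sub hB]

section GreedyProb

variable {Ω : Type*} {mΩ : MeasurableSpace Ω} {μ : Measure Ω} (X : ℕ × ℕ → Ω → Bool)

abbrev columnsUpTo (t : ℕ) : MeasurableSpace Ω :=
  ⨆ v ∈ {v : ℕ × ℕ | v.1 ≤ t}, MeasurableSpace.comap (X v) inferInstance

theorem columnsUpTo_mono : Monotone (columnsUpTo X) :=
  fun _ _ hst => biSup_mono fun _ hv => le_trans hv hst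

theorem columnsUpTo_le (hXmeas : ∀ v, Measurable (X v)) (t : ℕ) : columnsUpTo X t ≤ mΩ :=
  iSup₂_le fun v _ => (hXmeas v).comap_le

theorem measurable_site_columnsUpTo {t : ℕ} {v : ℕ × ℕ} (hv : v.1 ≤ t) :
    Measurable[columnsUpTo X t] (X v) :=
  Measurable.of_comap_le (le_iSup₂ (f := fun v (_ : v ∈ {v : ℕ × ℕ | v.1 ≤ t}) =>
    MeasurableSpace.comap (X v) inferInstance) v hv)

theorem measurable_greedyRow (t : ℕ) :
    Measurable[columnsUpTo X t] fun ω => greedyRow (X · ω) t := by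
  induction t with
  | zero => exact measurable_const
  | succ t ih =>
    have hrow := ih.mono (columnsUpTo_mono X t.le_succ) le_rfl
    have hbit : Measurable[columnsUpTo X (t + 1)] fun ω => greedyBit (X · ω) t :=
      measurable_apply_index (Y := fun j ω => X (t + 1, j) ω)
        (fun _ => measurable_site_columnsUpTo X le_rfl) hrow
    exact (measurable_of_countable fun q : ℕ × Bool => q.1 + if q.2 then 1 else 0).comp
      (hrow.prodMk hbit)

theorem measurable_greedyBit (t : ℕ) :
    Measurable[columnsUpTo X (t + 1)] fun ω => greedyBit (X · ω) t :=
  measurable_apply_index (Y := fun j ω => X (t + 1, j) ω)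
    (J := fun ω => greedyRow (X · ω) t) (fun _ => measurable_site_columnsUpTo X le_rfl)
    ((measurable_greedyRow X t).mono (columnsUpTo_mono X t.le_succ) le_rfl)

variable {X}

theorem indep_columnsUpTo_site (hXmeas : ∀ v, Measurable (X v)) (hX : iIndepFun X μ) (t j : ℕ) :
    Indep (columnsUpTo X t) (MeasurableSpace.comap (X (t + 1, j)) inferInstance) μ := by
  have hdisj : Disjoint {v : ℕ × ℕ | v.1 ≤ t} {(t + 1, j)} := by simp
  refine indep_of_indep_of_le_right (indep_iSup_of_disjoint (fun v => (hXmeas v).comap_le)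
    ((iIndepFun_iff_iIndep _ _ _).1 hX) hdisj) ?_
  exact le_iSup₂ (f := fun v (_ : v ∈ ({(t + 1, j)} : Set (ℕ × ℕ))) =>
    MeasurableSpace.comap (X v) inferInstance) (t + 1, j) rfl

/-- The inspected site lies in the fresh column `t + 1`, so conditionally on the past
(which fixes its row) the greedy step succeeds with the probability `q` of a single site. -/
theorem measure_inter_greedyBit (hXmeas : ∀ v, Measurable (X v)) (hX : iIndepFun X μ)
    {q : ENNReal} (hq : ∀ v, μ {ω | X v ω = true} = q) {t : ℕ} {A : Set Ω}
    (hA : MeasurableSet[columnsUpTo X t] A) :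
    μ (A ∩ {ω | greedyBit (X · ω) t = true}) = μ A * q := by
  set J := fun ω => greedyRow (X · ω) t
  have hJ : Measurable[columnsUpTo X t] J := measurable_greedyRow X t
  have hle := columnsUpTo_le X hXmeas t
  have hpiece (j : ℕ) : MeasurableSet[columnsUpTo X t] (A ∩ J ⁻¹' {j}) :=
    hA.inter (hJ (measurableSet_singleton j))
  have hdisj : Pairwise (Function.onFun Disjoint fun j : ℕ => A ∩ J ⁻¹' {j}) :=
    fun i j hij => ((Set.disjoint_singleton.2 hij).preimage J).mono Set.inter_subset_right
      Set.inter_subset_right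
  have hsite (j : ℕ) : MeasurableSet {ω | X (t + 1, j) ω = true} :=
    hXmeas _ (measurableSet_singleton true)
  calc μ (A ∩ {ω | greedyBit (X · ω) t = true})
      = μ (⋃ j, (A ∩ J ⁻¹' {j}) ∩ {ω | X (t + 1, j) ω = true}) := by
        congr 1; ext ω; simp [J, greedyBit]
    _ = ∑' j, μ (A ∩ J ⁻¹' {j}) * q := by
        rw [measure_iUnion (fun i j hij => (hdisj hij).mono Set.inter_subset_left
          Set.inter_subset_left) fun j => (hle _ (hpiece j)).inter (hsite j)]
        refine tsum_congr fun j => ?_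
        rw [(Indep_iff _ _ _).1 (indep_columnsUpTo_site hXmeas hX t j) _
          {ω | X (t + 1, j) ω = true} (hpiece j)
          ⟨{true}, measurableSet_singleton _, rfl⟩, ← hq (t + 1, j)]
    _ = μ A * q := by
        rw [ENNReal.tsum_mul_right, ← measure_iUnion hdisj fun j => hle _ (hpiece j),
          ← Set.inter_iUnion, ← Set.preimage_iUnion, Set.iUnion_of_singleton, Set.preimage_univ,
          Set.inter_univ]

theorem indep_columnsUpTo_greedyBit [IsProbabilityMeasure μ] (hXmeas : ∀ v, Measurable (X v))
    (hX : iIndepFun X μ) {q : ENNReal} (hq : ∀ v, μ {ω | X v ω = true} = q) (t : ℕ) :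
    Indep (columnsUpTo X t)
      (MeasurableSpace.generateFrom {{ω | greedyBit (X · ω) t = true}}) μ := by
  have hE : MeasurableSet {ω | greedyBit (X · ω) t = true} :=
    (measurable_greedyBit X t).mono (columnsUpTo_le X hXmeas (t + 1)) le_rfl
      (measurableSet_singleton true)
  refine IndepSets.indep (columnsUpTo_le X hXmeas t) (MeasurableSpace.generateFrom_le
      (by simpa using hE)) (@MeasurableSpace.isPiSystem_measurableSet Ω (columnsUpTo X t))
    (IsPiSystem.singleton _)
    (@MeasurableSpace.generateFrom_measurableSet _ (columnsUpTo X t)).symm rfl ?_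
  rw [IndepSets_iff]
  rintro A _ hA rfl
  have hμE := measure_inter_greedyBit hXmeas hX hq (@MeasurableSet.univ _ (columnsUpTo X t))
  rw [Set.univ_inter, measure_univ, one_mul] at hμE
  rw [measure_inter_greedyBit hXmeas hX hq hA, hμE]

theorem ae_tendsto_greedyCount_div [IsProbabilityMeasure μ] {p : ℝ} (hp : 0 ≤ p)
    (hXmeas : ∀ v, Measurable (X v)) (hX : iIndepFun X μ)
    (hXdist : ∀ v, μ {ω | X v ω = true} = ENNReal.ofReal p) :
    ∀ᵐ ω ∂μ, Tendsto (fun M : ℕ => (greedyCount (X · ω) M : ℝ) / M) atTop (𝓝 p) := by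
  set E : ℕ → Set Ω := fun t => {ω | greedyBit (X · ω) t = true}
  set Y : ℕ → Ω → ℝ := fun t => (E t).indicator fun _ => 1
  have hEF (t : ℕ) : MeasurableSet[columnsUpTo X (t + 1)] (E t) :=
    measurable_greedyBit X t (measurableSet_singleton true)
  have hE (t : ℕ) : MeasurableSet (E t) := columnsUpTo_le X hXmeas (t + 1) _ (hEF t)
  have hμE (t : ℕ) : μ (E t) = ENNReal.ofReal p := by
    simpa using
      measure_inter_greedyBit hXmeas hX hXdist (@MeasurableSet.univ _ (columnsUpTo X t))
  have hindep {s t : ℕ} (hst : s < t) : IndepFun (Y s) (Y t) μ :=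
    Indep.indicator_indepFun 1 ((columnsUpTo_mono X hst) _ (hEF s))
      (indep_of_indep_of_le_right (indep_columnsUpTo_greedyBit hXmeas hX hXdist t)
        (MeasurableSpace.comap_indicator_const_le_generateFrom_singleton _ _))
  have hpair : Pairwise (Function.onFun (IndepFun · · μ) Y) := fun s t hst =>
    hst.lt_or_gt.elim hindep fun h => (hindep h).symm
  have hmean : μ[Y 0] = p := by
    simp [Y, integral_indicator_const _ (hE 0), measureReal_def, hμE, hp]
  have hslln := strong_law_ae_real Y ((integrable_const 1).indicator (hE 0)) hpair
    fun t => identDistrib_indicator_const 1 (hE t) (hE 0) ((hμE t).trans (hμE 0).symm)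
  rw [hmean] at hslln
  filter_upwards [hslln] with ω hω
  convert hω using 3 with M
  simp [Y, E, Set.indicator_apply, greedyCount, Finset.sum_boole]

end GreedyProb

theorem soft_edge_trivial_LLN_general
    {Ω : Type*} [MeasureSpace Ω] [IsProbabilityMeasure (ℙ : Measure Ω)]
    (p : ℝ) (hp0 : 0 < p)
    (X : ℕ × ℕ → Ω → Bool)
    (hXmeas : ∀ v, Measurable (X v))
    (hXindep : iIndepFun X ℙ)
    (hXdist : ∀ v, ℙ {ω | X v ω = true} = ENNReal.ofReal p) :
    ∀ᵐ ω ∂(ℙ : Measure Ω),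
      Tendsto
        (fun (n : ℕ) => ((LIP (fun v => X v ω = true) ⌊p⁻¹ * n⌋₊ n : ℕ) : ℝ) / n)
        atTop (nhds 1) := by
  filter_upwards [ae_tendsto_greedyCount_div hp0.le hXmeas hXindep hXdist] with ω hω
  exact tendsto_div_of_min_le_of_le hp0 hω
    (fun n => min_greedyCount_le_LIP (X · ω) n _) fun _ => LIP_le

/-- Along the soft edge `m = ⌊p⁻¹ n⌋` the trivial bound is attained to first order:
`n⁻¹ L(⌊p⁻¹ n⌋, n) → 1` almost surely. -/
theorem soft_edge_trivial_LLN
    {Ω : Type*} [MeasureSpace Ω] [IsProbabilityMeasure (ℙ : Measure Ω)]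
    (p : ℝ) (hp0 : 0 < p) (hp1 : p < 1)
    (X : ℕ × ℕ → Ω → Bool)
    (hXmeas : ∀ v, Measurable (X v))
    (hXindep : iIndepFun X ℙ)
    (hXdist : ∀ v, ℙ {ω | X v ω = true} = ENNReal.ofReal p) :
    ∀ᵐ ω ∂(ℙ : Measure Ω),
      Tendsto
        (fun (n : ℕ) => ((LIP (fun v => X v ω = true) ⌊p⁻¹ * n⌋₊ n : ℕ) : ℝ) / n)
        atTop (nhds 1) :=
  soft_edge_trivial_LLN_general p hp0 X hXmeas hXindep hXdist
end
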